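/- The following statements are equivalent: (1) φ : Γ → Γ has at least one non-quasi-periodic point; (2) (X^Γ, σ_φ) is asymptotically sensitive; (3) (X^Γ, σ_φ) is syndetically sensitive; (4) (X^Γ, σ_φ) is cofinitely sensitive; (5) (X^Γ, σ_φ) is multi-sensitive; (6) (X^Γ, σ_φ) is ergodically sensitive. -/

import Mathlib

open Filter Topology

open scoped Classical in
/-- The metric `D` on `X^Γ`, via a fixed bijection `e : ℕ ≃ Γ`. -/
noncomputable def gsD {X Γ : Type*} (e : ℕ ≃ Γ) (x y : Γ → X) : ℝ :=
  ∑' n : ℕ, (if x (e n) = y (e n) then (0 : ℝ) else 1) / 2 ^ (n + 1)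

/-- The generalized shift `σ_φ`. -/
def gshift {X Γ : Type*} (φ : Γ → Γ) : (Γ → X) → (Γ → X) := fun x => x ∘ φ

/-- `(x, y)` is a scrambled pair of `f` with respect to the distance function `d`. -/
def scrambledPair {Z : Type*} (d : Z → Z → ℝ) (f : Z → Z) (x y : Z) : Prop :=
  liminf (fun n : ℕ => d (f^[n] x) (f^[n] y)) atTop = 0 ∧
    0 < limsup (fun n : ℕ => d (f^[n] x) (f^[n] y)) atTop

/-- `N(V, ε)`: the set of times `n` at which two points of `V` are `ε`-separated by
`σ_φ^n`. -/
noncomputable def NSet {X Γ : Type*} (e : ℕ ≃ Γ) (φ : Γ → Γ) (V : Set (Γ → X)) (ε : ℝ) :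
    Set ℕ :=
  {n : ℕ | ∃ x ∈ V, ∃ y ∈ V, ε < gsD e ((gshift φ)^[n] x) ((gshift φ)^[n] y)}

/-- `A ⊆ ℕ` is syndetic: there is `N ≥ 1` with `{i, i+1, …, i+N} ∩ A ≠ ∅` for all
`i ≥ 1`. -/
def IsSyndeticSet (A : Set ℕ) : Prop :=
  ∃ N : ℕ, 1 ≤ N ∧ ∀ i : ℕ, 1 ≤ i → ∃ j ∈ A, i ≤ j ∧ j ≤ i + N

/-! A point `a` that is not quasi-periodic has an injective orbit, so the finitely many
coordinates pinned down by a basic open set meet the orbit of `a` only finitely often. Changing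
a point along the rest of the orbit separates the `n`-th images at the coordinate `a` for all
other `n`: this gives cofinite sensitivity, hence the syndetic, multi- and ergodic versions,
and also asymptotic sensitivity. If every point is quasi-periodic, every orbit is finite, and
fixing the coordinates on the orbits of `e 0, …, e (N - 1)` gives an open set all of whose
images under `σ_φ^n` have diameter at most `2⁻ᴺ`, which rules out every kind of sensitivity. -/

def IsQuasiPeriodicPt {Γ : Type*} (φ : Γ → Γ) (a : Γ) : Prop :=
  ∃ n m : ℕ, 1 ≤ m ∧ m < n ∧ φ^[n] a = φ^[m] a

noncomputable def upperDensity (A : Set ℕ) : ℝ :=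
  limsup (fun n : ℕ => ((A ∩ Set.Iic n).ncard : ℝ) / (n + 1)) atTop

section QuasiPeriodic

variable {Γ : Type*} {φ : Γ → Γ} {a : Γ}

lemma injective_iterate_of_not_isQuasiPeriodicPt (ha : ¬IsQuasiPeriodicPt φ a) :
    Function.Injective fun n : ℕ => φ^[n] a := by
  have key : ∀ {m n : ℕ}, m < n → φ^[n] a ≠ φ^[m] a := by
    intro m n hmn hEq
    rcases Nat.eq_zero_or_pos m with rfl | hm
    · refine ha ⟨n + 1, 1, le_rfl, by omega, ?_⟩
      rw [Function.iterate_succ_apply', hEq, Function.iterate_zero_apply, Function.iterate_one]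
    · exact ha ⟨n, m, hm, hmn, hEq⟩
  intro m n h
  rcases lt_trichotomy m n with hlt | rfl | hgt
  · exact absurd h.symm (key hlt)
  · rfl
  · exact absurd h (key hgt)

lemma finite_setOf_iterate_mem (ha : ¬IsQuasiPeriodicPt φ a) {F : Set Γ} (hF : F.Finite) :
    {n : ℕ | φ^[n] a ∈ F}.Finite :=
  hF.preimage (injective_iterate_of_not_isQuasiPeriodicPt ha).injOn

lemma IsQuasiPeriodicPt.finite_range_iterate (ha : IsQuasiPeriodicPt φ a) :
    (Set.range fun k : ℕ => φ^[k] a).Finite := by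
  obtain ⟨n, m, -, hmn, hEq⟩ := ha
  have hper : Function.IsPeriodicPt φ (n - m) (φ^[m] a) := by
    rw [Function.IsPeriodicPt, Function.IsFixedPt, ← Function.iterate_add_apply,
      Nat.sub_add_cancel hmn.le, hEq]
  refine ((Set.finite_Iio n).image fun j => φ^[j] a).subset ?_
  rintro _ ⟨k, rfl⟩
  rcases lt_or_ge k m with hk | hk
  · exact ⟨k, by simp only [Set.mem_Iio]; omega, rfl⟩
  · refine ⟨(k - m) % (n - m) + m, ?_, ?_⟩
    · have := Nat.mod_lt (k - m) (Nat.sub_pos_of_lt hmn)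
      simp only [Set.mem_Iio]; omega
    · show φ^[(k - m) % (n - m) + m] a = φ^[k] a
      rw [Function.iterate_add_apply, hper.iterate_mod_apply, ← Function.iterate_add_apply,
        Nat.sub_add_cancel hk]

end QuasiPeriodic

section NatSets

lemma exists_forall_ge_mem_of_mem_cofinite {A : Set ℕ} (hA : A ∈ cofinite) :
    ∃ M, ∀ n ≥ M, n ∈ A :=
  mem_atTop_sets.1 (Nat.cofinite_eq_atTop ▸ hA)

lemma isSyndeticSet_of_mem_cofinite {A : Set ℕ} (hA : A ∈ cofinite) : IsSyndeticSet A := by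
  obtain ⟨M, hM⟩ := exists_forall_ge_mem_of_mem_cofinite hA
  exact ⟨M + 1, by omega, fun i _ => ⟨i + M, hM _ (by omega), by omega, by omega⟩⟩

lemma upperDensity_empty : upperDensity ∅ = 0 := by
  simp [upperDensity]

lemma ncard_inter_Iic_le (A : Set ℕ) (n : ℕ) : (A ∩ Set.Iic n).ncard ≤ n + 1 := by
  calc (A ∩ Set.Iic n).ncard ≤ (Set.Iic n).ncard :=
        Set.ncard_le_ncard Set.inter_subset_right (Set.finite_Iic n)
    _ = n + 1 := by rw [← Finset.coe_Iic, Set.ncard_coe_finset, Nat.card_Iic]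

lemma upperDensity_pos_of_mem_cofinite {A : Set ℕ} (hA : A ∈ cofinite) :
    0 < upperDensity A := by
  obtain ⟨M, hM⟩ := exists_forall_ge_mem_of_mem_cofinite hA
  have hbdd : IsBoundedUnder (· ≤ ·) atTop
      fun n : ℕ => ((A ∩ Set.Iic n).ncard : ℝ) / (n + 1) :=
    isBoundedUnder_of ⟨1, fun n => (div_le_one (by positivity)).2 (by
      exact_mod_cast ncard_inter_Iic_le A n)⟩
  have hhalf : ∀ᶠ n : ℕ in atTop,
      (1 / 2 : ℝ) ≤ ((A ∩ Set.Iic n).ncard : ℝ) / (n + 1) := by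
    filter_upwards [eventually_ge_atTop (2 * M)] with n hn
    have hIcc : n + 1 - M ≤ (A ∩ Set.Iic n).ncard := by
      calc n + 1 - M = (Set.Icc M n).ncard := by
            rw [← Finset.coe_Icc, Set.ncard_coe_finset, Nat.card_Icc]
        _ ≤ (A ∩ Set.Iic n).ncard :=
            Set.ncard_le_ncard (fun j hj => ⟨hM j hj.1, hj.2⟩)
              ((Set.finite_Iic n).subset Set.inter_subset_right)
    rw [le_div_iff₀ (by positivity)]
    have : ((n + 1 - M : ℕ) : ℝ) ≤ (A ∩ Set.Iic n).ncard := by exact_mod_cast hIcc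
    rw [Nat.cast_sub (by omega)] at this
    have hn' : (2 * M : ℝ) ≤ n := by exact_mod_cast hn
    push_cast at this
    linarith
  exact lt_of_lt_of_le (by norm_num) (le_limsup_of_frequently_le hhalf.frequently hbdd)

end NatSets

section Shift

variable {X Γ : Type*}

lemma gshift_iterate (φ : Γ → Γ) (n : ℕ) (x : Γ → X) :
    (gshift φ)^[n] x = x ∘ φ^[n] := by
  induction n with
  | zero => rfl
  | succ n ih =>
    rw [Function.iterate_succ_apply', ih, Function.iterate_succ]
    rfl

variable (e : ℕ ≃ Γ)

open scoped Classical in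
lemma summable_gsD_term (x y : Γ → X) :
    Summable fun n : ℕ => (if x (e n) = y (e n) then (0 : ℝ) else 1) / 2 ^ (n + 1) := by
  refine summable_geometric_two.of_nonneg_of_le (fun n => by positivity) fun n => ?_
  rw [one_div_pow]
  gcongr
  · split_ifs <;> norm_num
  · norm_num
  · omega

lemma gsD_nonneg (x y : Γ → X) : 0 ≤ gsD e x y :=
  tsum_nonneg fun n => by positivity

lemma half_pow_le_gsD {x y : Γ → X} {k : ℕ} (h : x (e k) ≠ y (e k)) :
    (1 / 2 : ℝ) ^ (k + 1) ≤ gsD e x y := by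
  classical
  have := (summable_gsD_term e x y).le_tsum k fun j _ => by positivity
  rwa [if_neg h, ← one_div_pow] at this

lemma gsD_le_half_pow {x y : Γ → X} {N : ℕ} (h : ∀ k < N, x (e k) = y (e k)) :
    gsD e x y ≤ (1 / 2) ^ N := by
  classical
  have hs := summable_gsD_term e x y
  rw [gsD, ← hs.sum_add_tsum_nat_add N,
    Finset.sum_eq_zero fun k hk => by rw [if_pos (h k (Finset.mem_range.1 hk)), zero_div],
    zero_add]
  calc (∑' i : ℕ, (if x (e (i + N)) = y (e (i + N)) then (0 : ℝ) else 1) / 2 ^ (i + N + 1))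
      ≤ ∑' i : ℕ, (1 / 2) ^ (N + 1) * (1 / 2 : ℝ) ^ i := by
        refine Summable.tsum_le_tsum (fun i => ?_) ((summable_nat_add_iff N).2 hs)
          (summable_geometric_two.mul_left _)
        rw [← pow_add, one_div_pow, show N + 1 + i = i + N + 1 by ring]
        gcongr
        split_ifs <;> norm_num
    _ = (1 / 2) ^ N := by rw [tsum_mul_left, tsum_geometric_two, pow_succ]; ring

lemma gsD_le_one (x y : Γ → X) : gsD e x y ≤ 1 := by
  simpa using gsD_le_half_pow e (x := x) (y := y) (N := 0) (by simp)

end Shift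

section Sensitivity

variable {X Γ : Type*} (e : ℕ ≃ Γ) (φ : Γ → Γ)

lemma half_pow_le_gsD_iterate {x y : Γ → X} {a : Γ} {n : ℕ}
    (h : x (φ^[n] a) ≠ y (φ^[n] a)) :
    (1 / 2 : ℝ) ^ (e.symm a + 1) ≤ gsD e ((gshift φ)^[n] x) ((gshift φ)^[n] y) :=
  half_pow_le_gsD e (by simpa [gshift_iterate] using h)

lemma exists_ne_on_eq_off [Nontrivial X] (x : Γ → X) (S : Set Γ) :
    ∃ y : Γ → X, (∀ γ ∈ S, y γ ≠ x γ) ∧ ∀ γ ∉ S, y γ = x γ := by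
  classical
  choose f hf using fun γ => exists_ne (x γ)
  exact ⟨S.piecewise f x, fun γ hγ => by simpa [hγ] using hf γ, fun γ hγ => by simp [hγ]⟩

lemma exists_separated_along_orbit [Nontrivial X] (x : Γ → X) (a : Γ) (F : Set Γ) :
    ∃ y ∈ F.pi fun γ => {x γ}, ∀ n, φ^[n] a ∉ F →
      (1 / 2 : ℝ) ^ (e.symm a + 1) ≤ gsD e ((gshift φ)^[n] x) ((gshift φ)^[n] y) := by
  obtain ⟨y, hne, heq⟩ := exists_ne_on_eq_off x ((Set.range fun n => φ^[n] a) \ F)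
  exact ⟨y, fun γ hγ => heq γ fun h => h.2 hγ,
    fun n hn => half_pow_le_gsD_iterate e φ (hne _ ⟨⟨n, rfl⟩, hn⟩).symm⟩

variable [TopologicalSpace X]

lemma exists_finset_pi_singleton_subset {U : Set (Γ → X)} (hU : IsOpen U) {x : Γ → X}
    (hx : x ∈ U) : ∃ F : Finset Γ, (F : Set Γ).pi (fun γ => {x γ}) ⊆ U := by
  obtain ⟨I, u, hu, hIU⟩ := isOpen_pi_iff.1 hU x hx
  exact ⟨I, fun y hy => hIU fun γ hγ => Set.mem_singleton_iff.1 (hy γ hγ) ▸ (hu γ hγ).2⟩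

lemma half_pow_lt_half_pow_succ (k : ℕ) : (1 / 2 : ℝ) ^ (k + 2) < (1 / 2) ^ (k + 1) :=
  pow_lt_pow_right_of_lt_one₀ (by norm_num) (by norm_num) (by omega)

variable [Nontrivial X] {a : Γ}

lemma NSet_compl_finite (ha : ¬IsQuasiPeriodicPt φ a) {V : Set (Γ → X)} (hV : IsOpen V)
    (hne : V.Nonempty) : (NSet e φ V ((1 / 2) ^ (e.symm a + 2)))ᶜ.Finite := by
  obtain ⟨x, hx⟩ := hne
  obtain ⟨F, hFV⟩ := exists_finset_pi_singleton_subset hV hx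
  obtain ⟨y, hy, hsep⟩ := exists_separated_along_orbit e φ x a F
  refine (finite_setOf_iterate_mem ha F.finite_toSet).subset fun n hn => ?_
  by_contra hnF
  exact hn ⟨x, hFV fun _ _ => rfl, y, hFV hy,
    (half_pow_lt_half_pow_succ _).trans_le (hsep n hnF)⟩

lemma exists_mem_lt_limsup_gsD (ha : ¬IsQuasiPeriodicPt φ a) {U : Set (Γ → X)}
    (hU : IsOpen U) {x : Γ → X} (hx : x ∈ U) : ∃ y ∈ U,
      (1 / 2) ^ (e.symm a + 2) <
        limsup (fun n : ℕ => gsD e ((gshift φ)^[n] x) ((gshift φ)^[n] y)) atTop := by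
  obtain ⟨F, hFU⟩ := exists_finset_pi_singleton_subset hU hx
  obtain ⟨y, hy, hsep⟩ := exists_separated_along_orbit e φ x a F
  have hev : ∀ᶠ n in atTop, φ^[n] a ∉ (F : Set Γ) := Nat.cofinite_eq_atTop ▸
    (finite_setOf_iterate_mem ha F.finite_toSet).eventually_cofinite_notMem
  have hbdd : IsBoundedUnder (· ≤ ·) atTop
      fun n : ℕ => gsD e ((gshift φ)^[n] x) ((gshift φ)^[n] y) :=
    isBoundedUnder_of ⟨1, fun n => gsD_le_one e _ _⟩
  exact ⟨y, hFU hy, (half_pow_lt_half_pow_succ _).trans_le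
    (le_limsup_of_frequently_le (hev.mono hsep).frequently hbdd)⟩

end Sensitivity

lemma exists_isOpen_nonempty_NSet_eq_empty {X Γ : Type*} [TopologicalSpace X]
    [DiscreteTopology X] [Nonempty X] (e : ℕ ≃ Γ) {φ : Γ → Γ}
    (hφ : ∀ a, IsQuasiPeriodicPt φ a) {ε : ℝ} (hε : 0 < ε) :
    ∃ V : Set (Γ → X), IsOpen V ∧ V.Nonempty ∧ NSet e φ V ε = ∅ := by
  obtain ⟨N, hN⟩ := exists_pow_lt_of_lt_one hε (by norm_num : (1 / 2 : ℝ) < 1)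
  set G := ⋃ k < N, Set.range fun j : ℕ => φ^[j] (e k)
  have hG : G.Finite :=
    (Set.finite_Iio N).biUnion fun k _ => (hφ (e k)).finite_range_iterate
  let x : Γ → X := Classical.arbitrary _
  refine ⟨G.pi fun γ => {x γ}, isOpen_set_pi hG fun _ _ => isOpen_discrete _,
    ⟨x, fun _ _ => rfl⟩, Set.eq_empty_of_forall_notMem ?_⟩
  rintro n ⟨y, hy, z, hz, hlt⟩
  refine hlt.not_ge ((gsD_le_half_pow e fun k hk => ?_).trans hN.le)
  have hmem : φ^[n] (e k) ∈ G := Set.mem_biUnion hk ⟨n, rfl⟩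
  simp only [gshift_iterate, Function.comp_apply]
  rw [hy _ hmem, hz _ hmem]

lemma limsup_gsD_iterate_le_of_NSet_eq_empty {X Γ : Type*} (e : ℕ ≃ Γ) (φ : Γ → Γ)
    {V : Set (Γ → X)} {ε : ℝ} (hV : NSet e φ V ε = ∅) {x y : Γ → X} (hx : x ∈ V)
    (hy : y ∈ V) :
    limsup (fun n : ℕ => gsD e ((gshift φ)^[n] x) ((gshift φ)^[n] y)) atTop ≤ ε :=
  limsup_le_of_le (isCoboundedUnder_le_of_le atTop fun _ => gsD_nonneg e _ _)
    (Eventually.of_forall fun _ => not_lt.1 fun hn => hV.subset ⟨x, hx, y, hy, hn⟩)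

theorem stmt13_general {X Γ : Type*} [TopologicalSpace X] [DiscreteTopology X]
    [Nontrivial X] (e : ℕ ≃ Γ) (φ : Γ → Γ) :
    List.TFAE
      [ -- (1) φ has a non-quasi-periodic point
        (∃ a : Γ, ¬ ∃ n m : ℕ, 1 ≤ m ∧ m < n ∧ φ^[n] a = φ^[m] a),
        -- (2) asymptotically sensitive
        (∃ ε > (0 : ℝ), ∀ x : Γ → X, ∀ U : Set (Γ → X), IsOpen U → x ∈ U →
          ∃ y ∈ U,
            ε < limsup (fun n : ℕ => gsD e ((gshift φ)^[n] x) ((gshift φ)^[n] y)) atTop),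
        -- (3) syndetically sensitive
        (∃ ε > (0 : ℝ), ∀ V : Set (Γ → X), IsOpen V → V.Nonempty →
          IsSyndeticSet (NSet e φ V ε)),
        -- (4) cofinitely sensitive
        (∃ ε > (0 : ℝ), ∀ V : Set (Γ → X), IsOpen V → V.Nonempty →
          (NSet e φ V ε)ᶜ.Finite),
        -- (5) multi-sensitive
        (∃ ε > (0 : ℝ), ∀ k : ℕ, 1 ≤ k → ∀ V : Fin k → Set (Γ → X),
          (∀ i, IsOpen (V i)) → (∀ i, (V i).Nonempty) →
            (⋂ i, NSet e φ (V i) ε).Nonempty),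
        -- (6) ergodically sensitive
        (∃ ε > (0 : ℝ), ∀ V : Set (Γ → X), IsOpen V → V.Nonempty →
          0 < limsup (fun n : ℕ =>
            ((NSet e φ V ε ∩ Set.Iic n).ncard : ℝ) / (n + 1)) atTop) ] := by
  tfae_have 1 → 4 := fun ⟨a, ha⟩ =>
    ⟨_, by positivity, fun V hV hne => NSet_compl_finite e φ ha hV hne⟩
  tfae_have 1 → 2 := fun ⟨a, ha⟩ =>
    ⟨_, by positivity, fun x U hU hx => exists_mem_lt_limsup_gsD e φ ha hU hx⟩
  tfae_have 4 → 3 := fun ⟨ε, hε, h⟩ =>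
    ⟨ε, hε, fun V hV hne => isSyndeticSet_of_mem_cofinite (h V hV hne)⟩
  tfae_have 4 → 5 := fun ⟨ε, hε, h⟩ => ⟨ε, hε, fun k _ V hV hne =>
    nonempty_of_mem ((iInter_mem (f := cofinite)).2 fun i => h _ (hV i) (hne i))⟩
  tfae_have 4 → 6 := fun ⟨ε, hε, h⟩ =>
    ⟨ε, hε, fun V hV hne => upperDensity_pos_of_mem_cofinite (h V hV hne)⟩
  tfae_have 2 → 1 := fun ⟨ε, hε, h⟩ => by
    by_contra! hφ
    obtain ⟨V, hV, ⟨x, hx⟩, hempty⟩ :=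
      exists_isOpen_nonempty_NSet_eq_empty (X := X) e hφ hε
    obtain ⟨y, hy, hlt⟩ := h x V hV hx
    exact hlt.not_ge (limsup_gsD_iterate_le_of_NSet_eq_empty e φ hempty hx hy)
  tfae_have 3 → 1 := fun ⟨ε, hε, h⟩ => by
    by_contra! hφ
    obtain ⟨V, hV, hne, hempty⟩ := exists_isOpen_nonempty_NSet_eq_empty (X := X) e hφ hε
    obtain ⟨N, -, hN⟩ := h V hV hne
    obtain ⟨j, hj, -⟩ := hN 1 le_rfl
    exact hempty.subset hj
  tfae_have 5 → 1 := fun ⟨ε, hε, h⟩ => by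
    by_contra! hφ
    obtain ⟨V, hV, hne, hempty⟩ := exists_isOpen_nonempty_NSet_eq_empty (X := X) e hφ hε
    obtain ⟨n, hn⟩ := h 1 le_rfl (fun _ => V) (fun _ => hV) (fun _ => hne)
    exact hempty.subset (Set.mem_iInter.1 hn 0)
  tfae_have 6 → 1 := fun ⟨ε, hε, h⟩ => by
    by_contra! hφ
    obtain ⟨V, hV, hne, hempty⟩ := exists_isOpen_nonempty_NSet_eq_empty (X := X) e hφ hε
    exact (h V hV hne).ne' (hempty ▸ upperDensity_empty)
  tfae_finish

/-- The following are equivalent: (1) `φ` has a non-quasi-periodic point;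
(2) `(X^Γ, σ_φ)` is asymptotically sensitive; (3) syndetically sensitive;
(4) cofinitely sensitive; (5) multi-sensitive; (6) ergodically sensitive. -/
theorem stmt13 {X Γ : Type*} [TopologicalSpace X] [DiscreteTopology X] [Finite X]
    [Nontrivial X] [Countable Γ] [Infinite Γ] (e : ℕ ≃ Γ) (φ : Γ → Γ) :
    List.TFAE
      [ -- (1) φ has a non-quasi-periodic point
        (∃ a : Γ, ¬ ∃ n m : ℕ, 1 ≤ m ∧ m < n ∧ φ^[n] a = φ^[m] a),
        -- (2) asymptotically sensitive
        (∃ ε > (0 : ℝ), ∀ x : Γ → X, ∀ U : Set (Γ → X), IsOpen U → x ∈ U →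
          ∃ y ∈ U,
            ε < limsup (fun n : ℕ => gsD e ((gshift φ)^[n] x) ((gshift φ)^[n] y)) atTop),
        -- (3) syndetically sensitive
        (∃ ε > (0 : ℝ), ∀ V : Set (Γ → X), IsOpen V → V.Nonempty →
          IsSyndeticSet (NSet e φ V ε)),
        -- (4) cofinitely sensitive
        (∃ ε > (0 : ℝ), ∀ V : Set (Γ → X), IsOpen V → V.Nonempty →
          (NSet e φ V ε)ᶜ.Finite),
        -- (5) multi-sensitive
        (∃ ε > (0 : ℝ), ∀ k : ℕ, 1 ≤ k → ∀ V : Fin k → Set (Γ → X),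
          (∀ i, IsOpen (V i)) → (∀ i, (V i).Nonempty) →
            (⋂ i, NSet e φ (V i) ε).Nonempty),
        -- (6) ergodically sensitive
        (∃ ε > (0 : ℝ), ∀ V : Set (Γ → X), IsOpen V → V.Nonempty →
          0 < limsup (fun n : ℕ =>
            ((NSet e φ V ε ∩ Set.Iic n).ncard : ℝ) / (n + 1)) atTop) ] :=
  stmt13_general e φ
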